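/- arXiv:1705.02299 — 4 statements merged into one kernel-verified Lean document; each statement's English description precedes it below -/
import Mathlib

section
/- Let $S \subset \mathbb{P}^{n_1}\times\cdots\times\mathbb{P}^{n_k}$ be a finite set with $x = |S| \le k+1$, such that the Segre images $\nu(S)$ are linearly dependent, but for every proper subset $S' \subsetneq S$ the set $\nu(S')$ is linearly independent. Then there exists a subset $E \subseteq \{1,\dots,k\}$ with $|E| = k + 2 - x$ such that for every $i \in E$, the projection $\pi_i(S)$ to the $i$-th factor is a single point. -/
/-!
Pick for each factor a linear form `φ i` vanishing at no point of `S`. The normalized coordinates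
`p ↦ P p i j / φ i (P p i)` are functions on `S` that depend only on the projective points; they
span a space `F i` of functions on `S` containing the constants, and `F i` consists of constants
only if `π_i(S)` is a single point. The products `F 1 ⋯ F k` are the restrictions of multilinear
forms, so after rescaling by `∏ i, φ i (P p i)` the relations of the circuit `S` are the vectors
orthogonal to `F 1 ⋯ F k`; they form a line spanned by a vector with no zero coordinate. Consequently only the constants multiply `F 1 ⋯ F k` into itself:
a nonconstant multiplier `f` would turn a relation `c` into the nonzero relation
`c (f - f q)`, which vanishes at `q`.

Now let `A` be the set of factors with `F i` nonconstant and take `M ⊆ A` of maximal size with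
`dim (∏_{i ∈ M} F i) ≥ |M| + 1`. If some `i ∈ A` lies outside `M`, maximality makes
`∏_{i ∈ M} F i` stable under every `F j`, `j ∉ M`; hence it is all of `F 1 ⋯ F k`, which is then
stable under the nonconstant `F i`, a contradiction. So `M = A`, and
`|A| + 1 ≤ dim (F 1 ⋯ F k) ≤ |S| - 1`.
-/

open Finset

noncomputable section

/-- The coordinate tensor of the simple (rank-one) tensor `v 1 ⊗ ⋯ ⊗ v k`,
i.e. the Segre image of the point of `ℙ^{n 1} × ⋯ × ℙ^{n k}` with coordinates `v`. -/
def Simple {k : ℕ} (n : Fin k → ℕ) (v : (i : Fin k) → (Fin (n i + 1) → ℂ)) :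
    ((i : Fin k) → Fin (n i + 1)) → ℂ :=
  fun j => ∏ i, v i (j i)

open Module

theorem Finset.prod_mul_le_of_forall_mul_le {κ M : Type*} [CommMonoid M] [Preorder M]
    [MulLeftMono M] {f : κ → M} {a : M} (s : Finset κ) (h : ∀ i ∈ s, f i * a ≤ a) :
    (∏ i ∈ s, f i) * a ≤ a := by
  classical
  induction s using Finset.induction_on with
  | empty => simp
  | insert i s hi ih =>
    rw [prod_insert hi, mul_assoc]
    exact (mul_le_mul_right (ih fun j hj => h j (mem_insert_of_mem hj)) _).trans
      (h i (mem_insert_self i s))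

namespace Submodule

variable {ι K : Type*} [Fintype ι] [Field K]

section Orthogonal

variable {W : Submodule K (ι → K)} {w : ι → K}

theorem finrank_lt_card_of_dotProduct_eq_zero (hw0 : w ≠ 0) (hw : ∀ g ∈ W, w ⬝ᵥ g = 0) :
    finrank K W < Fintype.card ι := by
  classical
  rw [← Module.finrank_fintype_fun_eq_card K]
  refine Submodule.finrank_lt fun hW => ?_
  obtain ⟨p, hp⟩ := Function.ne_iff.1 hw0
  have := hw (Pi.single p 1) (hW ▸ mem_top)
  rw [dotProduct_single, mul_one] at this
  exact hp this

theorem mem_one_of_forall_mul_mem (hw0 : w ≠ 0) (hw : ∀ g ∈ W, w ⬝ᵥ g = 0)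
    (hann : ∀ u : ι → K, (∀ g ∈ W, u ⬝ᵥ g = 0) → (∃ q, u q = 0) → u = 0)
    {f : ι → K} (hf : ∀ g ∈ W, f * g ∈ W) : f ∈ (1 : Submodule K (ι → K)) := by
  obtain ⟨q, -⟩ := Function.ne_iff.1 hw0
  by_contra hconst
  obtain ⟨p, hp⟩ : ∃ p, f p ≠ f q := by
    by_contra! h
    exact hconst (mem_one.2 ⟨f q, funext fun p => (h p).symm⟩)
  have hu : w * (f - fun _ => f q) = 0 := by
    refine hann _ (fun g hg => ?_) ⟨q, by simp⟩
    have hfg : (f - fun _ => f q) * g = f * g - f q • g := by ext; simp [sub_mul]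
    have hassoc : (w * (f - fun _ => f q)) ⬝ᵥ g = w ⬝ᵥ ((f - fun _ => f q) * g) := by
      simp only [dotProduct, Pi.mul_apply, mul_assoc]
    rw [hassoc, hfg, dotProduct_sub, dotProduct_smul, hw _ (hf g hg), hw g hg, smul_zero, sub_zero]
  have hwp : w p ≠ 0 := fun h => hw0 (hann w hw ⟨p, h⟩)
  exact mul_ne_zero hwp (sub_ne_zero.2 hp) (congrFun hu p)

end Orthogonal

variable {κ : Type*} [DecidableEq κ] (F : κ → Submodule K (ι → K))

theorem exists_subset_card_add_one_le_finrank_and_mul_le [Nonempty ι] (hF : ∀ i, 1 ≤ F i)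
    (A : Finset κ) : ∃ M ⊆ A, #M + 1 ≤ finrank K ↥(∏ i ∈ M, F i) ∧
      ∀ j ∈ A, j ∉ M → F j * ∏ i ∈ M, F i ≤ ∏ i ∈ M, F i := by
  set T := A.powerset.filter fun M => #M + 1 ≤ finrank K ↥(∏ i ∈ M, F i)
  have hempty : ∅ ∈ T := by
    refine mem_filter.2 ⟨empty_mem_powerset A, ?_⟩
    rw [card_empty, prod_empty, one_eq_span, finrank_span_singleton one_ne_zero]
  obtain ⟨M, hMT, hMmax⟩ := exists_max_image T card ⟨∅, hempty⟩
  obtain ⟨hMA, hMrank⟩ := mem_filter.1 hMT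
  refine ⟨M, mem_powerset.1 hMA, hMrank, fun j hjA hjM => ?_⟩
  have hle : ∏ i ∈ M, F i ≤ F j * ∏ i ∈ M, F i := by
    simpa only [Submodule.one_mul] using mul_le_mul_left (hF j) (∏ i ∈ M, F i)
  have hinsert : insert j M ∉ T := fun h => by
    have := hMmax _ h
    rw [card_insert_of_notMem hjM] at this
    omega
  rw [mem_filter, mem_powerset, prod_insert hjM, not_and, not_le] at hinsert
  have hrank := hinsert (insert_subset hjA (mem_powerset.1 hMA))
  rw [card_insert_of_notMem hjM] at hrank
  exact (eq_of_le_of_finrank_le hle (by omega)).ge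

open scoped Classical in
theorem card_filter_not_le_one_add_two_le [Fintype κ] (hF : ∀ i, 1 ≤ F i) {w : ι → K}
    (hw0 : w ≠ 0) (hw : ∀ g ∈ ∏ i, F i, w ⬝ᵥ g = 0)
    (hann : ∀ u : ι → K, (∀ g ∈ ∏ i, F i, u ⬝ᵥ g = 0) → (∃ q, u q = 0) → u = 0) :
    #{i | ¬ F i ≤ 1} + 2 ≤ Fintype.card ι := by
  have : Nonempty ι := (Function.ne_iff.1 hw0).nonempty
  set A : Finset κ := {i | ¬ F i ≤ 1}
  have hle_prod : ∀ M, ∏ i ∈ M, F i ≤ ∏ i, F i := fun M =>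
    prod_le_prod_of_subset_of_one_le' (subset_univ M) fun i _ _ => hF i
  obtain ⟨M, hMA, hMrank, hMmul⟩ := exists_subset_card_add_one_le_finrank_and_mul_le F hF A
  rcases hMA.eq_or_ssubset with hMA | hMA
  · subst hMA
    have := (finrank_mono (hle_prod A)).trans_lt (finrank_lt_card_of_dotProduct_eq_zero hw0 hw)
    omega
  obtain ⟨i, hiA, hiM⟩ := exists_of_ssubset hMA
  have hstable : ∀ j ∉ M, F j * ∏ l ∈ M, F l ≤ ∏ l ∈ M, F l := fun j hjM => by
    by_cases hjA : j ∈ A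
    · exact hMmul j hjA hjM
    · have hj1 : F j ≤ 1 := by simpa [A] using hjA
      simpa only [Submodule.one_mul] using mul_le_mul_left hj1 (∏ l ∈ M, F l)
  have hprod : ∏ j, F j = ∏ l ∈ M, F l := by
    refine le_antisymm ?_ (hle_prod M)
    rw [← prod_mul_prod_compl M, mul_comm]
    exact prod_mul_le_of_forall_mul_le _ fun j hj => hstable j (mem_compl.1 hj)
  have hi1 : F i ≤ 1 := fun f hf => mem_one_of_forall_mul_mem hw0 hw hann fun g hg => by
    rw [hprod] at hg ⊢
    exact hstable i hiM (mul_mem_mul hf hg)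
  exact absurd hi1 (mem_filter.1 hiA).2

end Submodule

theorem eq_zero_of_sum_smul_eq_zero_of_apply_eq_zero {ι R V : Type*} [Fintype ι] [DecidableEq ι]
    [Ring R] [AddCommGroup V] [Module R V] {v : ι → V}
    (hmin : ∀ I : Finset ι, I ≠ univ → LinearIndependent R fun p : I => v p)
    {γ : ι → R} (hγ : ∑ p, γ p • v p = 0) {q : ι} (hq : γ q = 0) : γ = 0 := by
  have hli := Fintype.linearIndependent_iff.1
    (hmin (univ.erase q) (erase_ne_self.2 (mem_univ q))) (fun p => γ p)
  funext p
  by_cases hpq : p = q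
  · exact hpq ▸ hq
  refine hli ?_ ⟨p, mem_erase.2 ⟨hpq, mem_univ p⟩⟩
  rw [sum_coe_sort (univ.erase q) fun p => γ p • v p, sum_erase _ (by rw [hq, zero_smul])]
  exact hγ

namespace Segre

variable {k x : ℕ} {n : Fin k → ℕ} (P : Fin x → (i : Fin k) → Fin (n i + 1) → ℂ)
  (φ : (i : Fin k) → Dual ℂ (Fin (n i + 1) → ℂ))

def normalizedCoord (i : Fin k) (j : Fin (n i + 1)) : Fin x → ℂ :=
  fun p => P p i j / φ i (P p i)

def factorSpace (i : Fin k) : Submodule ℂ (Fin x → ℂ) :=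
  Submodule.span ℂ (Set.range (normalizedCoord P φ i))

def weight (p : Fin x) : ℂ := ∏ i, φ i (P p i)

variable {P φ} (hφ : ∀ p i, φ i (P p i) ≠ 0)
include hφ

theorem one_le_factorSpace (i : Fin k) : 1 ≤ factorSpace P φ i := by
  rw [Submodule.one_le]
  have : (1 : Fin x → ℂ) =
      ∑ j, φ i (fun l => if j = l then 1 else 0) • normalizedCoord P φ i j := by
    funext p
    simp only [Pi.one_apply, Finset.sum_apply, Pi.smul_apply, smul_eq_mul, normalizedCoord,
      mul_div_assoc', ← sum_div]
    rw [eq_comm, div_eq_one_iff_eq (hφ p i), LinearMap.pi_apply_eq_sum_univ (φ i) (P p i)]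
    simp only [smul_eq_mul, mul_comm]
  rw [this]
  exact Submodule.sum_mem _ fun j _ => Submodule.smul_mem _ _ (Submodule.subset_span ⟨j, rfl⟩)

theorem exists_smul_eq_of_factorSpace_le_one {i : Fin k} (h : factorSpace P φ i ≤ 1)
    (p q : Fin x) : ∃ c : ℂ, c ≠ 0 ∧ P p i = c • P q i := by
  refine ⟨φ i (P p i) / φ i (P q i), div_ne_zero (hφ p i) (hφ q i), funext fun j => ?_⟩
  obtain ⟨a, ha⟩ := Submodule.mem_one.1 (h (Submodule.subset_span ⟨j, rfl⟩))
  have hpq : normalizedCoord P φ i j p = normalizedCoord P φ i j q := by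
    rw [← ha]
    rfl
  rw [normalizedCoord, normalizedCoord, div_eq_div_iff (hφ p i) (hφ q i)] at hpq
  rw [Pi.smul_apply, smul_eq_mul, div_mul_eq_mul_div, eq_div_iff (hφ q i), hpq, mul_comm]

theorem mul_weight_dotProduct_prod_normalizedCoord (γ : Fin x → ℂ)
    (m : (i : Fin k) → Fin (n i + 1)) :
    (γ * weight P φ) ⬝ᵥ ∏ i, normalizedCoord P φ i (m i) = (∑ p, γ p • Simple n (P p)) m := by
  simp only [dotProduct, Finset.sum_apply, Pi.smul_apply, smul_eq_mul, Simple, Pi.mul_apply,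
    Finset.prod_apply, normalizedCoord, weight, mul_assoc, ← prod_mul_distrib]
  exact sum_congr rfl fun p _ => congrArg _ (prod_congr rfl fun i _ => mul_div_cancel₀ _ (hφ p i))

open scoped Pointwise in
theorem forall_mem_prod_factorSpace_dotProduct_eq_zero_iff (γ : Fin x → ℂ) :
    (∀ g ∈ ∏ i, factorSpace P φ i, (γ * weight P φ) ⬝ᵥ g = 0) ↔
      ∑ p, γ p • Simple n (P p) = 0 := by
  unfold factorSpace
  rw [Submodule.prod_span]
  change _ ≤ LinearMap.ker (dotProductBilin ℂ ℂ (γ * weight P φ)) ↔ _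
  rw [Submodule.span_le]
  constructor
  · intro h
    funext m
    rw [← mul_weight_dotProduct_prod_normalizedCoord hφ]
    exact h ((Set.mem_finsetProd _ _ _).2
      ⟨fun i => normalizedCoord P φ i (m i), fun _ => ⟨_, rfl⟩, rfl⟩)
  · rintro h g hg
    obtain ⟨f, hf, rfl⟩ := (Set.mem_finsetProd _ _ _).1 hg
    choose m hm using fun i => hf (mem_univ i)
    simp only [← hm]
    show (γ * weight P φ) ⬝ᵥ _ = 0
    rw [mul_weight_dotProduct_prod_normalizedCoord hφ, h, Pi.zero_apply]

theorem weight_ne_zero (p : Fin x) : weight P φ p ≠ 0 :=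
  prod_ne_zero_iff.2 fun i _ => hφ p i

theorem eq_zero_of_forall_dotProduct_eq_zero_of_apply_eq_zero
    (hmin : ∀ I : Finset (Fin x), I ≠ univ → LinearIndependent ℂ fun p : I => Simple n (P p))
    {u : Fin x → ℂ} (hu : ∀ g ∈ ∏ i, factorSpace P φ i, u ⬝ᵥ g = 0) {q : Fin x}
    (hq : u q = 0) : u = 0 := by
  have hu' : u = (u / weight P φ) * weight P φ :=
    funext fun p => (div_mul_cancel₀ (u p) (weight_ne_zero hφ p)).symm
  rw [hu'] at hu ⊢
  have hrel := (forall_mem_prod_factorSpace_dotProduct_eq_zero_iff hφ _).1 hu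
  have hq' : (u / weight P φ) q = 0 := by rw [Pi.div_apply, hq, zero_div]
  rw [eq_zero_of_sum_smul_eq_zero_of_apply_eq_zero (v := fun p => Simple n (P p)) hmin hrel hq',
    zero_mul]

end Segre

open Segre in
theorem circuit_structure_general {k x : ℕ} (n : Fin k → ℕ)
    (P : Fin x → (i : Fin k) → Fin (n i + 1) → ℂ)
    (hro : ∀ p i, P p i ≠ 0)
    (hdep : ¬ LinearIndependent ℂ fun p => Simple n (P p))
    (hmin : ∀ I : Finset (Fin x), I ≠ Finset.univ →
      LinearIndependent ℂ fun p : I => Simple n (P p.1)) :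
    ∃ E : Finset (Fin k), E.card = k + 2 - x ∧
      ∀ i ∈ E, ∀ p q : Fin x, ∃ c : ℂ, c ≠ 0 ∧ P p i = c • P q i := by
  classical
  choose φ hφ using fun i => exists_dual_forall_apply_ne_zero (K := ℂ) (P · i) (hro · i)
  replace hφ : ∀ p i, φ i (P p i) ≠ 0 := fun p i => hφ i p
  obtain ⟨c, hc, p₀, hp₀⟩ := Fintype.not_linearIndependent_iff.1 hdep
  have hw0 : c * weight P φ ≠ 0 := fun h =>
    hp₀ ((mul_eq_zero.1 (congrFun h p₀)).resolve_right (weight_ne_zero hφ p₀))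
  have hactive := Submodule.card_filter_not_le_one_add_two_le (factorSpace P φ)
    (one_le_factorSpace hφ) hw0 ((forall_mem_prod_factorSpace_dotProduct_eq_zero_iff hφ c).2 hc)
    fun u hu ⟨q, hq⟩ => eq_zero_of_forall_dotProduct_eq_zero_of_apply_eq_zero hφ hmin hu hq
  have hinactive : k + 2 - x ≤ #{i | factorSpace P φ i ≤ 1} := by
    have := card_filter_add_card_filter_not (s := univ) fun i => factorSpace P φ i ≤ 1
    simp only [card_univ, Fintype.card_fin] at this hactive
    omega
  obtain ⟨E, hE, hEcard⟩ := exists_subset_card_eq hinactive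
  exact ⟨E, hEcard, fun i hi => exists_smul_eq_of_factorSpace_le_one hφ (mem_filter.1 (hE hi)).2⟩

/-- Lemma 4.4: let `S` be a set of `x ≤ k + 1` points of `ℙ^{n 1} × ⋯ × ℙ^{n k}` whose Segre
images are linearly dependent, every proper subset being linearly independent.  Then there is a
set `E` of `k + 2 - x` factors on which all points of `S` have the same projection. -/
theorem circuit_structure {k x : ℕ} (n : Fin k → ℕ)
    (P : Fin x → (i : Fin k) → Fin (n i + 1) → ℂ)
    (hro : ∀ p i, P p i ≠ 0)
    (hpts : ∀ p q : Fin x, p ≠ q →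
      ¬ (∀ i, ∃ c : ℂ, c ≠ 0 ∧ P p i = c • P q i))
    (hx : x ≤ k + 1)
    (hdep : ¬ LinearIndependent ℂ fun p => Simple n (P p))
    (hmin : ∀ I : Finset (Fin x), I ≠ Finset.univ →
      LinearIndependent ℂ fun p : I => Simple n (P p.1)) :
    ∃ E : Finset (Fin k), E.card = k + 2 - x ∧
      ∀ i ∈ E, ∀ p q : Fin x, ∃ c : ℂ, c ≠ 0 ∧ P p i = c • P q i :=
  circuit_structure_general n P hro hdep hmin
end
end

section
/- Let $A, B$ be zero-dimensional subschemes of $Y = \mathbb{P}^{n_1}\times\cdots\times\mathbb{P}^{n_k}$ whose Segre images $\nu(A), \nu(B)$ are each linearly independent. Then $\dim(\langle\nu(A)\rangle \cap \langle\nu(B)\rangle) = \dim\langle\nu(A\cap B)\rangle + h^1(\mathcal{I}_{A\cup B}(1))$. -/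
/-! `ν A` and `ν B` are bases of their spans, and so is `ν (A ∩ B)`. Grassmann's formula
`dim (U ⊓ W) + dim (U ⊔ W) = dim U + dim W` for `U = ⟨ν A⟩`, `W = ⟨ν B⟩`, with
`U ⊔ W = ⟨ν (A ∪ B)⟩`, combined with `#A + #B = #(A ∪ B) + #(A ∩ B)`, gives the claim. -/

open Finset

noncomputable section

section SpanImage

open Module Submodule

variable {K V α : Type*} [DivisionRing K] [AddCommGroup V] [Module K V] {f : α → V}

theorem finrank_span_image_eq_card {s : Finset α} (hs : LinearIndepOn K f s) :
    finrank K (span K (f '' s)) = s.card := by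
  rw [Set.image_eq_range, finrank_span_eq_card hs]
  simp

theorem finrank_span_image_le_card (s : Finset α) :
    finrank K (span K (f '' s)) ≤ s.card := by
  classical
  rw [← coe_image]
  exact (finrank_span_finset_le_card _).trans card_image_le

theorem finrank_span_image_inf_span_image [DecidableEq α] {A B : Finset α}
    (hA : LinearIndepOn K f A) (hB : LinearIndepOn K f B) :
    finrank K ↥(span K (f '' A) ⊓ span K (f '' B))
      = finrank K (span K (f '' ↑(A ∩ B)))
        + ((A ∪ B).card - finrank K (span K (f '' ↑(A ∪ B)))) := by
  have := FiniteDimensional.span_of_finite K (A.finite_toSet.image f)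
  have := FiniteDimensional.span_of_finite K (B.finite_toSet.image f)
  have hsup : span K (f '' A) ⊔ span K (f '' B) = span K (f '' ↑(A ∪ B)) := by
    rw [coe_union, Set.image_union, span_union]
  have grassmann := finrank_sup_add_finrank_inf_eq (span K (f '' A)) (span K (f '' B))
  rw [hsup, finrank_span_image_eq_card hA, finrank_span_image_eq_card hB] at grassmann
  rw [finrank_span_image_eq_card (hA.mono (coe_subset.mpr inter_subset_left))]
  have hle := finrank_span_image_le_card (K := K) (f := f) (A ∪ B)
  have hcard := card_union_add_card_inter A B
  omega

end SpanImage

theorem span_inter_span_general {k : ℕ} (n : Fin k → ℕ)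
    (A B : Finset ((i : Fin k) → Fin (n i + 1) → ℂ))
    (hA : LinearIndependent ℂ fun a : A => Simple n a.1)
    (hB : LinearIndependent ℂ fun b : B => Simple n b.1) :
    Module.finrank ℂ
        ↥(Submodule.span ℂ (Simple n '' ↑A) ⊓ Submodule.span ℂ (Simple n '' ↑B))
      = Module.finrank ℂ ↥(Submodule.span ℂ (Simple n '' ↑(A ∩ B)))
        + ((A ∪ B).card
            - Module.finrank ℂ ↥(Submodule.span ℂ (Simple n '' ↑(A ∪ B)))) :=
  finrank_span_image_inf_span_image hA hB

/-- Proposition 2.4 (reduced case): for finite subsets `A`, `B` of the product of projective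
spaces with `ν(A)` and `ν(B)` linearly independent,
`dim (⟨ν A⟩ ∩ ⟨ν B⟩) = dim ⟨ν (A ∩ B)⟩ + h¹(𝓘_{A∪B}(1))`, where in affine terms
`h¹(𝓘_{A∪B}(1)) = #(A ∪ B) - dim ⟨ν (A ∪ B)⟩` (affine dimensions of spans). -/
theorem span_inter_span {k : ℕ} (n : Fin k → ℕ)
    (A B : Finset ((i : Fin k) → Fin (n i + 1) → ℂ))
    (hro : ∀ v ∈ A ∪ B, ∀ i, v i ≠ 0)
    (hA : LinearIndependent ℂ fun a : A => Simple n a.1)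
    (hB : LinearIndependent ℂ fun b : B => Simple n b.1) :
    Module.finrank ℂ
        ↥(Submodule.span ℂ (Simple n '' ↑A) ⊓ Submodule.span ℂ (Simple n '' ↑B))
      = Module.finrank ℂ ↥(Submodule.span ℂ (Simple n '' ↑(A ∩ B)))
        + ((A ∪ B).card
            - Module.finrank ℂ ↥(Submodule.span ℂ (Simple n '' ↑(A ∪ B)))) :=
  span_inter_span_general n A B hA hB
end
end

section
/- Let $A \subset \mathbb{P}^n$ be a finite set of $c+1$ points that imposes independent conditions on forms of degree $e$ (i.e., $h^1(\mathcal{J}_A(e)) = 0$) for some $e \le k/2$, where $k \ge 2$. Let $T$ be a degree-$k$ form lying in the span of the $k$-th Veronese images $\{v_k(a) : a \in A\}$ but not in the span of the Veronese images of any proper subset. Then the rank of $T$ as a tensor in $(\mathbb{C}^{n+1})^{\otimes k}$ equals $c+1$; in particular the tensor rank of $T$ equals its symmetric rank. -/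
/-!
Write `k = e + m` with `e ≤ m` and flatten a tensor `T` of order `k` into the matrix
`M x y = T (x, y)` with rows indexed by `Fin e → Fin (n + 1)` and columns by `Fin m → Fin (n + 1)`.
A decomposition of `T` into `r` simple tensors factors `M` through `ℂ^r`, so `rank M` bounds the
tensor rank from below. For `T = ∑ λₚ aₚ^{⊗k}` we get `M = Pₑ · diag λ · Pₘᵀ`, where the columns
of `Pₑ` are the Veronese images `aₚ^{⊗e}`. The coefficients of the forms of degree `e`
interpolating the indicator functions of the points give a left inverse of `Pₑ`; multiplying these
forms by powers of a coordinate not vanishing at `aₚ` gives one of `Pₘ`. Hence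
`rank M = #{p | λₚ ≠ 0} = c + 1`, while `T = ∑ λₚ aₚ^{⊗k}` is itself a decomposition into `c + 1`
simple tensors.
-/

open Finset

noncomputable section

/-- The rank of a tensor: the minimal number of simple tensors summing to it. -/
def tensorRank {k : ℕ} (n : Fin k → ℕ) (T : ((i : Fin k) → Fin (n i + 1)) → ℂ) : ℕ :=
  sInf {r | ∃ v : Fin r → ((i : Fin k) → (Fin (n i + 1) → ℂ)), T = ∑ p, Simple n (v p)}

/-- The `k`-th Veronese image of `u`: the coordinate tensor of `u^{⊗ k}`. -/
def Power {k n : ℕ} (u : Fin (n + 1) → ℂ) : (Fin k → Fin (n + 1)) → ℂ :=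
  fun j => ∏ i, u (j i)

/-- The symmetric rank of a symmetric tensor in `(ℂ^{n+1})^{⊗ k}`. -/
def symRank {k n : ℕ} (T : (Fin k → Fin (n + 1)) → ℂ) : ℕ :=
  sInf {r | ∃ (u : Fin r → Fin (n + 1) → ℂ) (lam : Fin r → ℂ),
    T = ∑ p, lam p • Power (u p)}

open scoped Matrix

/-- `h¹(𝒥_A(e)) = 0` for the set `A` of the points `a p`. -/
def ImposesIndependentConditions {ι : Type*} {n : ℕ} (a : ι → Fin (n + 1) → ℂ) (e : ℕ) : Prop :=
  ∀ φ : ι → ℂ, ∃ f : MvPolynomial (Fin (n + 1)) ℂ,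
    f.IsHomogeneous e ∧ ∀ p, MvPolynomial.eval (a p) f = φ p

lemma Finsupp.exists_prod_eq_prod_pow {σ M : Type*} [CommMonoid M] {e : ℕ} (d : σ →₀ ℕ)
    (hd : d.degree = e) :
    ∃ j : Fin e → σ, ∀ u : σ → M, ∏ i, u (j i) = ∏ x ∈ d.support, u x ^ d x := by
  classical
  subst hd
  set l := d.toMultiset.toList
  have hlen : l.length = d.degree := by
    simp [l, Finsupp.card_toMultiset, Finsupp.degree, Finsupp.sum]
    rfl
  refine ⟨fun i => l[i.cast hlen.symm], fun u => ?_⟩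
  calc ∏ i, u l[i.cast hlen.symm] = ∏ i : Fin l.length, u l[i.1] :=
        Fintype.prod_equiv (finCongr hlen.symm) _ _ fun _ => rfl
    _ = (d.toMultiset.map u).prod := by
        rw [Fin.prod_univ_fun_getElem, Multiset.prod_map_toList]
    _ = ∏ x ∈ d.support, u x ^ d x := by
        simp only [Finset.prod_multiset_map_count, Finsupp.toFinset_toMultiset,
          Finsupp.count_toMultiset]

lemma MvPolynomial.IsHomogeneous.exists_eval_eq_sum_mul_power {n e : ℕ}
    {f : MvPolynomial (Fin (n + 1)) ℂ} (hf : f.IsHomogeneous e) :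
    ∃ w : (Fin e → Fin (n + 1)) → ℂ, ∀ u, MvPolynomial.eval u f = ∑ x, w x * Power u x := by
  classical
  have hJ : ∀ d, ∃ j : Fin e → Fin (n + 1), d ∈ f.support →
      ∀ u : Fin (n + 1) → ℂ, Power u j = ∏ x ∈ d.support, u x ^ d x := by
    intro d
    by_cases hd : d ∈ f.support
    · have hdeg : d.degree = e := by
        rw [Finsupp.degree_eq_weight_one]
        exact hf (MvPolynomial.mem_support_iff.mp hd)
      obtain ⟨j, hj⟩ := d.exists_prod_eq_prod_pow (M := ℂ) hdeg
      exact ⟨j, fun _ => hj⟩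
    · exact ⟨fun _ => 0, fun h => absurd h hd⟩
  choose J hJ using hJ
  refine ⟨fun x => ∑ d ∈ f.support with J d = x, f.coeff d, fun u => ?_⟩
  calc MvPolynomial.eval u f = ∑ d ∈ f.support, f.coeff d * Power u (J d) := by
        rw [MvPolynomial.eval_eq]
        exact sum_congr rfl fun d hd => by rw [hJ d hd u]
    _ = ∑ x, ∑ d ∈ f.support with J d = x, f.coeff d * Power u (J d) :=
        (sum_fiberwise _ _ _).symm
    _ = _ := sum_congr rfl fun x _ => by
        rw [sum_mul]
        exact sum_congr rfl fun d hd => by rw [(mem_filter.mp hd).2]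

def powerMatrix {ι : Type*} (k : ℕ) {n : ℕ} (a : ι → Fin (n + 1) → ℂ) :
    Matrix (Fin k → Fin (n + 1)) ι ℂ :=
  Matrix.of fun x p => Power (a p) x

namespace ImposesIndependentConditions

variable {ι : Type*} {n e : ℕ} {a : ι → Fin (n + 1) → ℂ}

lemma exists_mul_powerMatrix_eq_one [DecidableEq ι] (h : ImposesIndependentConditions a e) :
    ∃ W : Matrix ι (Fin e → Fin (n + 1)) ℂ, W * powerMatrix e a = 1 := by
  choose f hf hfa using fun p => h fun q => if p = q then 1 else 0
  choose w hw using fun p => (hf p).exists_eval_eq_sum_mul_power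
  refine ⟨Matrix.of w, ?_⟩
  ext p q
  simp [Matrix.mul_apply, powerMatrix, ← hw, hfa, Matrix.one_apply]

lemma mono [Fintype ι] (h : ImposesIndependentConditions a e) (ha : ∀ p, a p ≠ 0) {m : ℕ}
    (hem : e ≤ m) :
    ImposesIndependentConditions a m := by
  classical
  intro φ
  choose x₀ hx₀ using fun p => Function.ne_iff.mp (ha p)
  choose F hF hFa using fun p =>
    h fun q => if q = p then φ p / a p (x₀ p) ^ (m - e) else 0
  refine ⟨∑ p, F p * MvPolynomial.X (x₀ p) ^ (m - e), ?_, fun q => ?_⟩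
  · rw [← MvPolynomial.mem_homogeneousSubmodule]
    refine Submodule.sum_mem _ fun p _ => ?_
    have hp := (hF p).mul ((MvPolynomial.isHomogeneous_X ℂ (x₀ p)).pow (m - e))
    rwa [show e + 1 * (m - e) = m by omega, ← MvPolynomial.mem_homogeneousSubmodule] at hp
  · simp [hFa, div_mul_cancel₀ _ (pow_ne_zero _ (hx₀ q))]

end ImposesIndependentConditions

def flatten {α ι : Type*} {e m : ℕ} (T : (Fin (e + m) → ι) → α) :
    Matrix (Fin e → ι) (Fin m → ι) α :=
  Matrix.of fun x y => T (Fin.append x y)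

lemma power_append {n e m : ℕ} (u : Fin (n + 1) → ℂ) (x : Fin e → Fin (n + 1))
    (y : Fin m → Fin (n + 1)) : Power u (Fin.append x y) = Power u x * Power u y := by
  simp [Power, Fin.prod_univ_add]

lemma flatten_sum_smul_power {ι : Type*} [Fintype ι] [DecidableEq ι] {n e m : ℕ}
    (lam : ι → ℂ) (a : ι → Fin (n + 1) → ℂ) :
    flatten (∑ p, lam p • Power (a p) : (Fin (e + m) → Fin (n + 1)) → ℂ) =
      powerMatrix e a * Matrix.diagonal lam * (powerMatrix m a)ᵀ := by
  ext x y
  simp only [flatten, powerMatrix, Matrix.of_apply, Matrix.mul_apply, Matrix.transpose_apply,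
    Matrix.diagonal, Finset.sum_apply, Pi.smul_apply, smul_eq_mul, power_append]
  simp [mul_comm, mul_left_comm]

lemma rank_flatten_sum_simple_le {n e m r : ℕ} (v : Fin r → Fin (e + m) → Fin (n + 1) → ℂ) :
    (flatten (∑ s, Simple (fun _ => n) (v s))).rank ≤ r := by
  let B : Matrix (Fin e → Fin (n + 1)) (Fin r) ℂ :=
    Matrix.of fun x s => ∏ i, v s (Fin.castAdd m i) (x i)
  let C : Matrix (Fin r) (Fin m → Fin (n + 1)) ℂ :=
    Matrix.of fun s y => ∏ i, v s (Fin.natAdd e i) (y i)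
  have hBC : flatten (∑ s, Simple (fun _ => n) (v s)) = B * C := by
    ext x y
    simp [B, C, flatten, Simple, Matrix.mul_apply, Fin.prod_univ_add]
  rw [hBC]
  simpa using (Matrix.rank_mul_le_left B C).trans (Matrix.rank_le_card_width B)

lemma Matrix.rank_le_rank_mul_mul {R ι κ μ ν : Type*} [CommRing R] [StrongRankCondition R]
    [Fintype ι] [Fintype κ] [Fintype μ] [Fintype ν] [DecidableEq ι] [DecidableEq κ]
    {W : Matrix ι μ R} {P : Matrix μ ι R} {Q : Matrix κ ν R} {V : Matrix ν κ R}
    (hP : W * P = 1) (hQ : Q * V = 1) (D : Matrix ι κ R) : D.rank ≤ (P * D * Q).rank :=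
  calc D.rank = (W * (P * D * Q) * V).rank := by
        simp only [Matrix.mul_assoc, hQ, Matrix.mul_one, ← Matrix.mul_assoc W, hP, Matrix.one_mul]
    _ ≤ (P * D * Q).rank := (Matrix.rank_mul_le_left _ _).trans (Matrix.rank_mul_le_right _ _)

lemma smul_power_eq_simple {k n : ℕ} (hk : k ≠ 0) (s : ℂ) (u : Fin (n + 1) → ℂ) :
    ∃ v : Fin k → Fin (n + 1) → ℂ, Simple (fun _ => n) v = s • Power u := by
  obtain ⟨k, rfl⟩ := Nat.exists_eq_succ_of_ne_zero hk
  refine ⟨fun i => if i = 0 then s • u else u, ?_⟩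
  ext j
  simp [Simple, Power, Fin.prod_univ_succ, Fin.succ_ne_zero, mul_assoc]

lemma tensorRank_le_symRank {k n r : ℕ} (hk : k ≠ 0) {T : (Fin k → Fin (n + 1)) → ℂ}
    (u : Fin r → Fin (n + 1) → ℂ) (lam : Fin r → ℂ) (hT : T = ∑ p, lam p • Power (u p)) :
    tensorRank (fun _ => n) T ≤ symRank T := by
  obtain ⟨u', lam', hT'⟩ : symRank T ∈ {r | ∃ (u : Fin r → Fin (n + 1) → ℂ) (lam : Fin r → ℂ),
      T = ∑ p, lam p • Power (u p)} := Nat.sInf_mem ⟨r, u, lam, hT⟩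
  choose v hv using fun p => smul_power_eq_simple hk (lam' p) (u' p)
  exact Nat.sInf_le ⟨v, by simp [hT', hv]⟩

lemma rank_flatten_le_tensorRank {n e m r : ℕ} {T : (Fin (e + m) → Fin (n + 1)) → ℂ}
    (v : Fin r → Fin (e + m) → Fin (n + 1) → ℂ) (hT : T = ∑ s, Simple (fun _ => n) (v s)) :
    (flatten T).rank ≤ tensorRank (fun _ => n) T := by
  obtain ⟨v', hv'⟩ : tensorRank (fun _ => n) T ∈
      {r | ∃ v : Fin r → Fin (e + m) → Fin (n + 1) → ℂ, T = ∑ s, Simple (fun _ => n) (v s)} :=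
    Nat.sInf_mem ⟨r, v, hT⟩
  have h := rank_flatten_sum_simple_le v'
  rwa [← hv'] at h

lemma ne_zero_of_forall_notMem_span {R M ι : Type*} [Semiring R] [AddCommMonoid M] [Module R M]
    [Fintype ι] {f : ι → M} {lam : ι → R}
    (h : ∀ I : Finset ι, I ≠ univ → ∑ p, lam p • f p ∉ Submodule.span R (f '' I)) (p : ι) :
    lam p ≠ 0 := by
  classical
  intro hp
  refine h (univ.erase p) (erase_ssubset (mem_univ p)).ne ?_
  rw [← sum_erase univ (by rw [hp, zero_smul])]
  exact Submodule.sum_smul_mem _ _ fun q hq => Submodule.subset_span (Set.mem_image_of_mem f hq)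

theorem comon_case_general {n k c e : ℕ} (hk : 2 ≤ k) (he : 2 * e ≤ k)
    (a : Fin (c + 1) → Fin (n + 1) → ℂ)
    (ha0 : ∀ p, a p ≠ 0)
    (hindep : ∀ φ : Fin (c + 1) → ℂ, ∃ f : MvPolynomial (Fin (n + 1)) ℂ,
      f.IsHomogeneous e ∧ ∀ p, MvPolynomial.eval (a p) f = φ p)
    (T : (Fin k → Fin (n + 1)) → ℂ)
    (hTmem : T ∈ Submodule.span ℂ (Set.range fun p => (Power (a p) : (Fin k → Fin (n + 1)) → ℂ)))
    (hTnr : ∀ I : Finset (Fin (c + 1)), I ≠ Finset.univ →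
      T ∉ Submodule.span ℂ ((fun p => (Power (a p) : (Fin k → Fin (n + 1)) → ℂ)) '' ↑I)) :
    tensorRank (fun _ : Fin k => n) T = c + 1 ∧ symRank T = c + 1 := by
  obtain ⟨m, rfl⟩ : ∃ m, k = e + m := ⟨k - e, by omega⟩
  obtain ⟨lam, hT⟩ := (Submodule.mem_span_range_iff_exists_fun ℂ).mp hTmem
  rw [← hT] at hTnr
  have hlam : ∀ p, lam p ≠ 0 := ne_zero_of_forall_notMem_span hTnr
  obtain ⟨W, hW⟩ := ImposesIndependentConditions.exists_mul_powerMatrix_eq_one hindep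
  obtain ⟨V, hV⟩ :=
    (ImposesIndependentConditions.mono hindep ha0 (by omega : e ≤ m)).exists_mul_powerMatrix_eq_one
  choose v hv using fun p => smul_power_eq_simple (by omega : e + m ≠ 0) (lam p) (a p)
  have hsym : symRank T ≤ c + 1 := Nat.sInf_le ⟨a, lam, hT.symm⟩
  have htensor := tensorRank_le_symRank (by omega) a lam hT.symm
  have hflatten : c + 1 ≤ tensorRank (fun _ => n) T :=
    calc c + 1 = (Matrix.diagonal lam).rank := by simp [Matrix.rank_diagonal, hlam]
      _ ≤ (flatten T).rank := by
        rw [← hT, flatten_sum_smul_power]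
        exact Matrix.rank_le_rank_mul_mul hW
          (by rw [← Matrix.transpose_mul, hV, Matrix.transpose_one]) _
      _ ≤ _ := rank_flatten_le_tensorRank v (by simp [← hT, hv])
  omega

/-- Corollary 3.8 (Comon): if `A ⊂ ℙ^n` is a set of `c + 1` points imposing independent
conditions on forms of degree `e ≤ k/2`, and `T` lies in the span of the `k`-th Veronese
images of `A` but of no proper subset, then the (tensor) rank of `T` is `c + 1`; in particular
it coincides with the symmetric rank of `T`. -/
theorem comon_case {n k c e : ℕ} (hk : 2 ≤ k) (he : 2 * e ≤ k)
    (a : Fin (c + 1) → Fin (n + 1) → ℂ)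
    (ha0 : ∀ p, a p ≠ 0)
    (hdist : ∀ p q, p ≠ q → ∀ s : ℂ, a p ≠ s • a q)
    (hindep : ∀ φ : Fin (c + 1) → ℂ, ∃ f : MvPolynomial (Fin (n + 1)) ℂ,
      f.IsHomogeneous e ∧ ∀ p, MvPolynomial.eval (a p) f = φ p)
    (T : (Fin k → Fin (n + 1)) → ℂ)
    (hTmem : T ∈ Submodule.span ℂ (Set.range fun p => (Power (a p) : (Fin k → Fin (n + 1)) → ℂ)))
    (hTnr : ∀ I : Finset (Fin (c + 1)), I ≠ Finset.univ →
      T ∉ Submodule.span ℂ ((fun p => (Power (a p) : (Fin k → Fin (n + 1)) → ℂ)) '' ↑I)) :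
    tensorRank (fun _ : Fin k => n) T = c + 1 ∧ symRank T = c + 1 :=
  comon_case_general hk he a ha0 hindep T hTmem hTnr
end
end

section
/- Fix a partition $E \sqcup F = \{1,\dots,k\}$ and let $M_F = \prod_{i\in F}(n_i+1)$. Let $A$ be a finite set of rank-one tensors whose $E$-flattening projections are linearly independent and whose $F$-flattening projections span a subspace of codimension $< M_F - c$ in the $F$-flattening space, i.e., of dimension $> c$ (with $0 < c < M_F$). Let $T \in \operatorname{span}(A)$ with $T \notin \operatorname{span}(A')$ for every proper $A' \subsetneq A$. Then $T$ cannot be written as a linear combination of at most $c$ rank-one tensors. -/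
open Finset
open Matrix

noncomputable section

/-- The flattening projection of a simple tensor to the factors in `E`. -/
def SimpleOn {k : ℕ} (n : Fin k → ℕ) (E : Finset (Fin k))
    (v : (i : Fin k) → (Fin (n i + 1) → ℂ)) :
    ((i : E) → Fin (n i.1 + 1)) → ℂ :=
  fun j => ∏ i : E, v i.1 (j i)

/-- Gluing an `E`-index and an `Eᶜ`-index into a full multi-index. -/
def glueIdx {k : ℕ} (n : Fin k → ℕ) (E : Finset (Fin k))
    (jE : (i : E) → Fin (n i.1 + 1)) (jF : (i : ↥Eᶜ) → Fin (n i.1 + 1)) :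
    (i : Fin k) → Fin (n i + 1) :=
  fun i => if h : i ∈ E then jE ⟨i, h⟩ else jF ⟨i, Finset.mem_compl.mpr h⟩

theorem simple_glue {k : ℕ} (n : Fin k → ℕ) (E : Finset (Fin k))
    (v : (i : Fin k) → (Fin (n i + 1) → ℂ))
    (jE : (i : E) → Fin (n i.1 + 1)) (jF : (i : ↥Eᶜ) → Fin (n i.1 + 1)) :
    Simple n v (glueIdx n E jE jF) = SimpleOn n E v jE * SimpleOn n Eᶜ v jF := by
  unfold Simple SimpleOn
  rw [← Finset.prod_mul_prod_compl E (fun i => v i (glueIdx n E jE jF i))]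
  congr 1
  · rw [Finset.prod_coe_sort_eq_attach, ← Finset.prod_attach E (fun i => v i (glueIdx n E jE jF i))]
    refine Finset.prod_congr rfl fun i _ => ?_
    congr 1
    simp only [glueIdx, dif_pos i.2]
  · rw [Finset.prod_coe_sort_eq_attach,
      ← Finset.prod_attach Eᶜ (fun i => v i (glueIdx n E jE jF i))]
    refine Finset.prod_congr rfl fun i _ => ?_
    congr 1
    have hi : (i : Fin k) ∉ E := Finset.mem_compl.mp i.2
    simp only [glueIdx, dif_neg hi]

set_option maxHeartbeats 1000000 in
/-- Theorem 3.1 (reduced case): fix a partition `E ⊔ F = {1,…,k}` and `0 < c < M_F`.  If the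
`E`-flattening projections of the finite set `A` of rank-one tensors are linearly independent,
the span of its `F`-flattening projections has dimension `> c` (codimension `< M_F - c`), and
`T ∈ ⟨A⟩` lies in the span of no proper subset of `A`, then `T` is not a linear combination of
at most `c` rank-one tensors. -/
theorem no_small_decomposition {k r c : ℕ} (n : Fin k → ℕ) (E : Finset (Fin k))
    (hc0 : 0 < c) (hc : c < ∏ i ∈ Eᶜ, (n i + 1))
    (a : Fin r → (i : Fin k) → Fin (n i + 1) → ℂ)
    (hro : ∀ p i, a p i ≠ 0)
    (hset : Function.Injective fun p => Simple n (a p))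
    (hE : LinearIndependent ℂ fun p => SimpleOn n E (a p))
    (hF : c < Module.finrank ℂ
      ↥(Submodule.span ℂ (Set.range fun p => SimpleOn n Eᶜ (a p))))
    (T : ((i : Fin k) → Fin (n i + 1)) → ℂ)
    (hTmem : T ∈ Submodule.span ℂ (Set.range fun p => Simple n (a p)))
    (hTnr : ∀ I : Finset (Fin r), I ≠ Finset.univ →
      T ∉ Submodule.span ℂ ((fun p => Simple n (a p)) '' ↑I)) :
    ¬ ∃ (sz : ℕ) (w : Fin sz → (i : Fin k) → Fin (n i + 1) → ℂ),
        sz ≤ c ∧ T ∈ Submodule.span ℂ (Set.range fun p => Simple n (w p)) := by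
  classical
  rintro ⟨sz, w, hsz, hTw⟩
  -- representations of T
  obtain ⟨t, hT⟩ := (Submodule.mem_span_range_iff_exists_fun ℂ).mp hTmem
  obtain ⟨s, hS⟩ := (Submodule.mem_span_range_iff_exists_fun ℂ).mp hTw
  -- all coefficients t p are nonzero
  have ht : ∀ p, t p ≠ 0 := by
    intro p0 hp0
    refine hTnr (Finset.univ.erase p0) (fun h => ?_) ?_
    · exact (Finset.erase_eq_self.mp h) (Finset.mem_univ p0)
    · rw [← hT, ← Finset.sum_erase_add _ _ (Finset.mem_univ p0), hp0, zero_smul, add_zero]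
      exact Submodule.sum_mem _ fun q hq => Submodule.smul_mem _ _
        (Submodule.subset_span (Set.mem_image_of_mem _ (Finset.mem_coe.mpr hq)))
  -- the contracted columns
  set contr : ((i : ↥Eᶜ) → Fin (n i.1 + 1)) → ((i : E) → Fin (n i.1 + 1)) → ℂ :=
    fun jF jE => T (glueIdx n E jE jF) with hcontr
  have hcontr_a : ∀ jF, contr jF =
      ∑ p, (t p * SimpleOn n Eᶜ (a p) jF) • SimpleOn n E (a p) := by
    intro jF
    funext jE
    have := congrFun hT (glueIdx n E jE jF)
    simp only [Finset.sum_apply, Pi.smul_apply, smul_eq_mul] at this ⊢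
    rw [hcontr]
    simp only [← this, simple_glue]
    exact Finset.sum_congr rfl fun p _ => by ring
  have hcontr_w : ∀ jF, contr jF =
      ∑ q, (s q * SimpleOn n Eᶜ (w q) jF) • SimpleOn n E (w q) := by
    intro jF
    funext jE
    have := congrFun hS (glueIdx n E jE jF)
    simp only [Finset.sum_apply, Pi.smul_apply, smul_eq_mul] at this ⊢
    rw [hcontr]
    simp only [← this, simple_glue]
    exact Finset.sum_congr rfl fun q _ => by ring
  -- the injective "reconstruction" map
  let lam : (Fin r → ℂ) →ₗ[ℂ] (((i : E) → Fin (n i.1 + 1)) → ℂ) :=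
    { toFun := fun x => ∑ p, (t p * x p) • SimpleOn n E (a p)
      map_add' := by
        intro x y
        simp only [Pi.add_apply, mul_add, add_smul, Finset.sum_add_distrib]
      map_smul' := by
        intro m x
        simp only [Pi.smul_apply, smul_eq_mul, RingHom.id_apply, Finset.smul_sum, smul_smul]
        exact Finset.sum_congr rfl fun p _ => by ring_nf }
  have hlam_inj : Function.Injective lam := by
    rw [← LinearMap.ker_eq_bot, LinearMap.ker_eq_bot']
    intro x hx
    have h0 : ∑ p, (t p * x p) • (fun q => SimpleOn n E (a q)) p = 0 := hx
    have := Fintype.linearIndependent_iff.mp hE (fun p => t p * x p) h0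
    funext p
    have := this p
    exact (mul_eq_zero.mp this).resolve_left (ht p) 
  -- the matrix of F-projections
  set M : Matrix (Fin r) ((i : ↥Eᶜ) → Fin (n i.1 + 1)) ℂ :=
    Matrix.of (fun p => SimpleOn n Eᶜ (a p)) with hM
  set C : Submodule ℂ (Fin r → ℂ) := Submodule.span ℂ (Set.range Mᵀ) with hC
  -- span of columns equals the image of C under lam
  have hVC : Submodule.span ℂ (Set.range contr) = Submodule.map lam C := by
    have key : contr = lam ∘ Mᵀ := by
      funext jF
      rw [hcontr_a jF]
      rfl
    rw [key, Submodule.map_span]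
    exact congrArg _ (Set.range_comp _ _)
  -- dimension of C is the rank of M, which is > c
  have hcC : c < Module.finrank ℂ C := by
    have h1 : M.rank = Module.finrank ℂ C := M.rank_eq_finrank_span_cols
    have h2 : Mᵀ.rank = M.rank := M.rank_transpose
    have h3 : Mᵀ.rank = Module.finrank ℂ
        (Submodule.span ℂ (Set.range fun p => SimpleOn n Eᶜ (a p))) := by
      rw [Mᵀ.rank_eq_finrank_span_cols]
      rfl
    omega
  -- the span of contractions lies in the span of E-projections of w
  have hVW : Submodule.span ℂ (Set.range contr) ≤
      Submodule.span ℂ (Set.range fun q => SimpleOn n E (w q)) := by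
    rw [Submodule.span_le]
    rintro x ⟨jF, rfl⟩
    rw [hcontr_w jF]
    exact Submodule.sum_mem _ fun q _ => Submodule.smul_mem _ _
      (Submodule.subset_span (Set.mem_range_self q))
  -- dimension bookkeeping
  have h4 : Module.finrank ℂ C =
      Module.finrank ℂ (Submodule.map lam C) :=
    (Submodule.equivMapOfInjective lam hlam_inj C).finrank_eq
  have h5 : Module.finrank ℂ
      (Submodule.span ℂ (Set.range fun q => SimpleOn n E (w q))) ≤ sz := by
    have h := finrank_range_le_card (R := ℂ) (fun q => SimpleOn n E (w q))
    rw [Fintype.card_fin] at h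
    exact h
  have h6 : Module.finrank ℂ (Submodule.map lam C) ≤
      Module.finrank ℂ
        (Submodule.span ℂ (Set.range fun q => SimpleOn n E (w q))) := by
    rw [← hVC]
    exact Submodule.finrank_mono hVW
  omega
end
end
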